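/- arXiv:2604.00908 — 4 statements merged into one kernel-verified Lean document; each statement's English description precedes it below -/
import Mathlib

section
/- Suppose C : ℤ (finite chain) → ℝ and σ > 0 satisfy the nonlinear eigenvalue problem -C(n-1) - C(n+1) + (3 + e^{-σ})C(n) = (2 + 2cosh σ)C(n) at tooth sites and -C(n-1) - C(n+1) + 2C(n) = (2 + 2cosh σ)C(n) at hole sites. Then setting C̃(n) = e^{-σ}C(n), the pair (C, C̃) is an eigenvector of a linear 2N×2N matrix 𝕄 (with entries 0, ±1) with eigenvalue e^σ; explicitly, -C(n-1) - C(n+1) + C(n) = e^σ C(n) at tooth sites and -C(n-1) - C(n+1) - C̃(n) = e^σ C(n) at hole sites. -/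
/-- Linearization of the `E > 4` nonlinear eigenvalue problem on a periodic comb:
if `C` satisfies the comb eigenvalue equations with `E = 2 + 2cosh σ`, then with
`C̃(n) = e^{-σ} C(n)` the pair `(C, C̃)` satisfies the linear equations
`-C(n-1) - C(n+1) + C(n) = e^σ C(n)` at teeth and
`-C(n-1) - C(n+1) - C̃(n) = e^σ C(n)` at holes (an eigenvector of the `2N×2N`
matrix `𝕄` with eigenvalue `e^σ`). -/
theorem stmt6 (N : ℕ) [NeZero N] (χ : ZMod N → Bool) (σ : ℝ) (hσ : 0 < σ)
    (C : ZMod N → ℝ)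
    (ht : ∀ n, χ n = true →
      -C (n - 1) - C (n + 1) + (3 + Real.exp (-σ)) * C n = (2 + 2 * Real.cosh σ) * C n)
    (hh : ∀ n, χ n = false →
      -C (n - 1) - C (n + 1) + 2 * C n = (2 + 2 * Real.cosh σ) * C n) :
    (∀ n, (fun m => Real.exp (-σ) * C m) n = Real.exp (-σ) * C n) ∧
    (∀ n, χ n = true → -C (n - 1) - C (n + 1) + C n = Real.exp σ * C n) ∧
    (∀ n, χ n = false →
      -C (n - 1) - C (n + 1) - (fun m => Real.exp (-σ) * C m) n = Real.exp σ * C n) := by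
  have hc : 2 * Real.cosh σ = Real.exp σ + Real.exp (-σ) := by
    rw [Real.cosh_eq]; ring
  refine ⟨fun n => rfl, fun n hn => ?_, fun n hn => ?_⟩
  · have := ht n hn; rw [hc] at this; linarith
  · have := hh n hn; rw [hc] at this; simp only []; linarith
end

section
/- The function w₋(z) = (1/2)(1 + z - √((z+3)(z-1))) evaluated at z = e^{iθ} satisfies, as θ → 0⁺, log(Re(w₋(e^{iθ}))) = √(θ/2) + O(θ); consequently, with E = 2 - 2cos θ = θ² + O(θ⁴), the Lyapunov exponent γ(E) = log(Re w₋(e^{iθ})) of the regular comb scales as γ(E) ~ (1/√2)·E^{1/4} as E → 0⁺. -/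
/-!
Put `σ = sin (θ/2)` and `u = (z + 3)(z - 1)` with `z = e^{iθ}`. Then `‖u‖ = 2σ√(16 - 12σ²)` and
`Re u = -4σ²(3 - 2σ²)`, so `Re √u = √((‖u‖ + Re u)/2) = 2√σ + O(σ)`, whence
`Re w₋(e^{iθ}) = 1 + t` with `t = √σ + O(σ)` and `log (1 + t) = √σ + O(σ)`.
Finally `σ = θ/2 + O(θ³)` and `2 - 2 cos θ = (2σ)²`.
-/

namespace Real

theorem sqrt_sub_sqrt_le_sqrt_sub (x y : ℝ) : √x - √y ≤ √(x - y) := by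
  rcases le_or_gt y 0 with hy | hy
  · rw [sqrt_eq_zero'.2 hy, sub_zero]
    exact sqrt_le_sqrt (by linarith)
  rcases le_or_gt x y with hxy | hxy
  · linarith [sqrt_le_sqrt hxy, sqrt_nonneg (x - y)]
  rw [sub_le_iff_le_add, sqrt_le_iff]
  refine ⟨by positivity, ?_⟩
  nlinarith [sq_sqrt (sub_nonneg.2 hxy.le), sq_sqrt hy.le,
    mul_nonneg (sqrt_nonneg (x - y)) (sqrt_nonneg y)]

theorem abs_sqrt_sub_sqrt_le (x y : ℝ) : |√x - √y| ≤ √|x - y| :=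
  abs_sub_le_iff.2
    ⟨(sqrt_sub_sqrt_le_sqrt_sub x y).trans (sqrt_le_sqrt (le_abs_self _)),
     (sqrt_sub_sqrt_le_sqrt_sub y x).trans (sqrt_le_sqrt (abs_sub_comm x y ▸ le_abs_self _))⟩

theorem abs_log_one_add_sub_self_le {t : ℝ} (ht : 0 ≤ t) : |log (1 + t) - t| ≤ t ^ 2 := by
  have upper : log (1 + t) ≤ t := by linarith [log_le_sub_one_of_pos (by linarith : 0 < 1 + t)]
  have lower : 2 * t / (t + 2) ≤ log (1 + t) := le_log_one_add_of_nonneg ht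
  have : t - t ^ 2 ≤ 2 * t / (t + 2) := by
    rw [le_div_iff₀ (by linarith)]
    nlinarith [pow_nonneg ht 3]
  rw [abs_le]
  constructor <;> nlinarith

theorem cos_eq_one_sub_two_mul_sin_half_sq (θ : ℝ) : cos θ = 1 - 2 * sin (θ / 2) ^ 2 := by
  rw [← cos_two_mul_eq_one_sub, mul_div_cancel₀ θ two_ne_zero]

theorem two_sub_two_mul_cos_eq (θ : ℝ) : 2 - 2 * cos θ = (2 * sin (θ / 2)) ^ 2 := by
  rw [cos_eq_one_sub_two_mul_sin_half_sq]
  ring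

end Real

-- The paper's `w₋(z) = (1 + z - √((z+3)(z-1)))/2`: its branch of `√` is minus the principal one.
noncomputable def combW (z : ℂ) : ℂ :=
  (1 + z + ((z + 3) * (z - 1)) ^ ((1 : ℂ) / 2)) / 2

noncomputable def combRadicand (σ : ℝ) : ℝ :=
  σ * √(16 - 12 * σ ^ 2) - 2 * σ ^ 2 * (3 - 2 * σ ^ 2)

noncomputable def combRe (σ : ℝ) : ℝ :=
  1 + (√(combRadicand σ) - 2 * σ ^ 2) / 2

section
variable (θ : ℝ)

theorem re_exp_add_three_mul_exp_sub_one :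
    ((Complex.exp (Complex.I * θ) + 3) * (Complex.exp (Complex.I * θ) - 1)).re
      = -4 * Real.sin (θ / 2) ^ 2 * (3 - 2 * Real.sin (θ / 2) ^ 2) := by
  have hre := Complex.exp_ofReal_mul_I_re θ
  have him := Complex.exp_ofReal_mul_I_im θ
  rw [mul_comm] at hre him
  simp only [Complex.mul_re, Complex.add_re, Complex.sub_re, Complex.add_im, Complex.sub_im,
    hre, him, Complex.one_re, Complex.one_im]
  norm_num
  nlinarith [Real.sin_sq_add_cos_sq θ, Real.cos_eq_one_sub_two_mul_sin_half_sq θ]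

theorem norm_exp_add_three :
    ‖Complex.exp (Complex.I * θ) + 3‖ = √(16 - 12 * Real.sin (θ / 2) ^ 2) := by
  have hre := Complex.exp_ofReal_mul_I_re θ
  have him := Complex.exp_ofReal_mul_I_im θ
  rw [mul_comm] at hre him
  rw [Complex.norm_def, Complex.normSq_apply]
  congr 1
  simp only [Complex.add_re, Complex.add_im, hre, him]
  norm_num
  nlinarith [Real.sin_sq_add_cos_sq θ, Real.cos_eq_one_sub_two_mul_sin_half_sq θ]

theorem re_combW_exp_mul_I (hθ : 0 ≤ Real.sin (θ / 2)) :
    (combW (Complex.exp (Complex.I * θ))).re = combRe (Real.sin (θ / 2)) := by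
  have hnorm : ‖(Complex.exp (Complex.I * θ) + 3) * (Complex.exp (Complex.I * θ) - 1)‖
      = 2 * Real.sin (θ / 2) * √(16 - 12 * Real.sin (θ / 2) ^ 2) := by
    rw [norm_mul, norm_exp_add_three, Complex.norm_exp_I_mul_ofReal_sub_one, Real.norm_eq_abs,
      abs_of_nonneg (by positivity)]
    ring
  have hcos := Complex.exp_ofReal_mul_I_re θ
  rw [mul_comm] at hcos
  rw [combW, combRe, combRadicand, one_div, Complex.div_ofNat_re, Complex.add_re, Complex.add_re,
    Complex.cpow_inv_two_re, hnorm, re_exp_add_three_mul_exp_sub_one, hcos, Complex.one_re,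
    Real.cos_eq_one_sub_two_mul_sin_half_sq]
  ring_nf

end

theorem combRadicand_mem_Icc {σ : ℝ} (hσ0 : 0 ≤ σ) (hσ1 : σ ≤ 1) :
    combRadicand σ ∈ Set.Icc (4 * σ - 9 * σ ^ 2) (4 * σ) := by
  have hσ2 : σ ^ 2 ≤ 1 := by nlinarith
  have upper : √(16 - 12 * σ ^ 2) ≤ 4 :=
    Real.sqrt_le_iff.2 ⟨by norm_num, by nlinarith⟩
  have lower : 4 - 3 * σ ^ 2 ≤ √(16 - 12 * σ ^ 2) :=
    Real.le_sqrt_of_sq_le (by nlinarith)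
  constructor <;> rw [combRadicand] <;> nlinarith [mul_le_mul_of_nonneg_left upper hσ0,
    mul_le_mul_of_nonneg_left lower hσ0, pow_nonneg hσ0 3]

theorem abs_log_combRe_sub_sqrt_le {σ : ℝ} (hσ0 : 0 ≤ σ) (hσ : σ ≤ 1 / 4) :
    |Real.log (combRe σ) - √σ| ≤ 3 * σ := by
  obtain ⟨hA_lower, hA_upper⟩ := combRadicand_mem_Icc hσ0 (by linarith)
  set A := combRadicand σ
  set t := (√A - 2 * σ ^ 2) / 2 with ht
  have sqrt_four_mul : √(4 * σ) = 2 * √σ := by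
    rw [Real.sqrt_mul (by norm_num), show (4 : ℝ) = 2 ^ 2 by norm_num, Real.sqrt_sq zero_le_two]
  have sqrt_A_near : |√A - 2 * √σ| ≤ 3 * σ := by
    rw [← sqrt_four_mul]
    calc |√A - √(4 * σ)| ≤ √|A - 4 * σ| := Real.abs_sqrt_sub_sqrt_le _ _
      _ ≤ √((3 * σ) ^ 2) := Real.sqrt_le_sqrt (abs_le.2 ⟨by linarith, by linarith⟩)
      _ = 3 * σ := Real.sqrt_sq (by linarith)
  have t_nonneg : 0 ≤ t := by
    have : √((2 * σ ^ 2) ^ 2) ≤ √A := Real.sqrt_le_sqrt (by nlinarith [pow_nonneg hσ0 3])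
    rw [Real.sqrt_sq (by positivity)] at this
    linarith
  have t_le : t ≤ √σ := by
    have := Real.sqrt_le_sqrt hA_upper
    rw [sqrt_four_mul] at this
    linarith [sq_nonneg σ]
  have t_near : |t - √σ| ≤ 2 * σ := by
    rw [abs_le] at sqrt_A_near ⊢
    constructor <;> nlinarith
  have log_near : |Real.log (1 + t) - t| ≤ σ :=
    (Real.abs_log_one_add_sub_self_le t_nonneg).trans
      (by nlinarith [Real.sq_sqrt hσ0, Real.sqrt_nonneg σ])
  have combRe_eq : combRe σ = 1 + t := rfl
  calc |Real.log (combRe σ) - √σ| = |(Real.log (1 + t) - t) + (t - √σ)| := by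
        rw [combRe_eq]; ring_nf
    _ ≤ σ + 2 * σ := (abs_add_le _ _).trans (add_le_add log_near t_near)
    _ = 3 * σ := by ring

section
variable {θ : ℝ}

theorem abs_sqrt_sin_half_sub_sqrt_half_le (h0 : 0 < θ) (h1 : θ ≤ 1) :
    |√(Real.sin (θ / 2)) - √(θ / 2)| ≤ θ := by
  have upper := Real.sin_le (by linarith : 0 ≤ θ / 2)
  have lower := Real.sin_gt_sub_cube (by linarith : 0 < θ / 2)
  calc |√(Real.sin (θ / 2)) - √(θ / 2)| ≤ √|Real.sin (θ / 2) - θ / 2| :=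
        Real.abs_sqrt_sub_sqrt_le _ _
    _ ≤ √(θ ^ 2) := Real.sqrt_le_sqrt (abs_le.2 ⟨by nlinarith [pow_pos h0 3], by nlinarith⟩)
    _ = θ := Real.sqrt_sq h0.le

theorem abs_log_re_combW_sub_sqrt_le (h0 : 0 ≤ θ) (h1 : θ ≤ 1 / 2) :
    |Real.log (combW (Complex.exp (Complex.I * θ))).re - √(Real.sin (θ / 2))|
      ≤ 3 * Real.sin (θ / 2) := by
  have hσ0 : 0 ≤ Real.sin (θ / 2) :=
    Real.sin_nonneg_of_nonneg_of_le_pi (by linarith) (by linarith [Real.pi_gt_three])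
  rw [re_combW_exp_mul_I θ hσ0]
  exact abs_log_combRe_sub_sqrt_le hσ0 (by linarith [Real.sin_le (by linarith : 0 ≤ θ / 2)])

end

theorem rpow_one_fourth_two_mul_sq_div_sqrt_two {σ : ℝ} (hσ : 0 ≤ σ) :
    ((2 * σ) ^ 2) ^ ((1 : ℝ) / 4) / √2 = √σ := by
  rw [← Real.rpow_natCast, ← Real.rpow_mul (by positivity),
    show ((2 : ℕ) : ℝ) * (1 / 4) = 1 / 2 by norm_num, ← Real.sqrt_eq_rpow,
    Real.sqrt_mul zero_le_two, mul_div_cancel_left₀ _ (by positivity)]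

open Asymptotics Filter Complex in
/-- Low-energy scaling of the regular comb Lyapunov exponent: with
`w₋(z) = (1 + z - √((z+3)(z-1)))/2` in the branch with `w₋(1) = 1` and
`Re w₋(e^{iθ}) > 1` for small `θ > 0` (here realized as `(1 + z + ((z+3)(z-1))^{1/2})/2`
with the principal power), one has `log(Re w₋(e^{iθ})) = √(θ/2) + O(θ)` as `θ → 0⁺`;
with `E = 2 - 2cos θ`, this gives `γ(E) = log(Re w₋(e^{iθ})) = E^{1/4}/√2 + O(E^{1/2})`. -/
theorem stmt15 :
    (fun θ : ℝ =>
        Real.log ((((1 : ℂ) + Complex.exp (Complex.I * θ)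
            + ((Complex.exp (Complex.I * θ) + 3) * (Complex.exp (Complex.I * θ) - 1))
              ^ ((1 : ℂ) / 2)) / 2).re)
          - Real.sqrt (θ / 2))
      =O[nhdsWithin 0 (Set.Ioi 0)] (fun θ : ℝ => θ) ∧
    (fun θ : ℝ =>
        Real.log ((((1 : ℂ) + Complex.exp (Complex.I * θ)
            + ((Complex.exp (Complex.I * θ) + 3) * (Complex.exp (Complex.I * θ) - 1))
              ^ ((1 : ℂ) / 2)) / 2).re)
          - (2 - 2 * Real.cos θ) ^ ((1 : ℝ) / 4) / Real.sqrt 2)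
      =O[nhdsWithin 0 (Set.Ioi 0)]
        (fun θ : ℝ => Real.sqrt (2 - 2 * Real.cos θ)) := by
  refine ⟨.of_bound 4 ?_, .of_bound (3 / 2) ?_⟩ <;>
    filter_upwards [Ioo_mem_nhdsGT (by norm_num : (0 : ℝ) < 1 / 2)] with θ ⟨h0, h1⟩ <;>
    rw [← combW.eq_1, Real.norm_eq_abs, Real.norm_eq_abs]
  · have key := abs_log_re_combW_sub_sqrt_le h0.le h1.le
    have hsqrt := abs_sqrt_sin_half_sub_sqrt_half_le h0 (by linarith)
    have hsin := Real.sin_le (by linarith : 0 ≤ θ / 2)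
    rw [abs_of_pos h0]
    calc _ ≤ |Real.log (combW (Complex.exp (Complex.I * θ))).re - √(Real.sin (θ / 2))|
          + |√(Real.sin (θ / 2)) - √(θ / 2)| := abs_sub_le _ _ _
      _ ≤ 4 * θ := by linarith
  · have hσ0 : 0 ≤ Real.sin (θ / 2) :=
      Real.sin_nonneg_of_nonneg_of_le_pi (by linarith) (by linarith [Real.pi_gt_three])
    rw [Real.two_sub_two_mul_cos_eq, rpow_one_fourth_two_mul_sq_div_sqrt_two hσ0,
      Real.sqrt_sq (mul_nonneg zero_le_two hσ0), abs_of_nonneg (mul_nonneg zero_le_two hσ0)]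
    linarith [abs_log_re_combW_sub_sqrt_le h0.le h1.le]
end

section
/- Let C be a finite chain with at least one tooth and one hole, and suppose φ ≠ 0 solves the binary-chain eigenvalue equation φ(n+1) + φ(n-1) = 0 at holes, φ(n+1) + φ(n-1) = Vφ(n) at teeth, with V > 2 and Dirichlet boundary conditions. Then every tooth of C is isolated (bounded by holes or endpoints on both sides), and the distances between consecutive teeth (counting the endpoints as teeth) are all even; equivalently, C is a 2-tooth chain. -/
/-!
Two consecutive zeros of `φ` propagate, so `φ 1 ≠ 0`. As long as only even sites are teeth,
`φ (n + 1) = -φ (n - 1)` at every site, so `φ` vanishes exactly at the even sites. At the first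
odd tooth `t` we therefore have `φ (t - 1) = 0 ≠ φ t`, and from there on the pairs
`(φ n, φ (n + 1))` stay *growing*: for `V ≥ 2` a tooth never decreases `|φ|`, and a hole only swaps
the roles of the two entries. Hence `φ L ≠ 0`, a contradiction. So all teeth are even, and
`φ L = 0` forces `L` to be even as well.
-/

def IsChainSolution (L : ℤ) (χ : ℤ → Bool) (V : ℝ) (φ : ℤ → ℝ) : Prop :=
  ∀ n : ℤ, 1 ≤ n → n ≤ L - 1 → φ (n + 1) + φ (n - 1) = if χ n then V * φ n else 0

-- A cone invariant under the transfer maps `(x, y) ↦ (y, -x)` and `(x, y) ↦ (y, V * y - x)`, `V ≥ 2`.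
def GrowingPair (x y : ℝ) : Prop :=
  (0 < x * y ∧ x ^ 2 ≤ y ^ 2) ∨ (x * y < 0 ∧ y ^ 2 ≤ x ^ 2)

namespace GrowingPair

variable {x y : ℝ}

theorem snd_ne_zero (h : GrowingPair x y) : y ≠ 0 := by
  rintro rfl
  rcases h with ⟨h, -⟩ | ⟨h, -⟩ <;> simp at h

theorem of_ne_zero {V : ℝ} (hV : 1 ≤ V) (hy : y ≠ 0) : GrowingPair y (V * y) := by
  have hy2 : 0 < y ^ 2 := by positivity
  have hV2 : 1 ≤ V ^ 2 := by nlinarith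
  left
  constructor
  · nlinarith
  · rw [mul_pow]; nlinarith

theorem hole (h : GrowingPair x y) : GrowingPair y (-x) := by
  rcases h with ⟨hxy, hsq⟩ | ⟨hxy, hsq⟩
  · right; constructor <;> nlinarith
  · left; constructor <;> nlinarith

theorem tooth {V : ℝ} (hV : 2 ≤ V) (h : GrowingPair x y) : GrowingPair y (V * y - x) := by
  have hy2 : 0 < y ^ 2 := by have := h.snd_ne_zero; positivity
  left
  rcases h with ⟨hxy, hsq⟩ | ⟨hxy, hsq⟩
  · -- `x * y ≤ y ^ 2`, and `y ^ 2 * ((V * y - x) ^ 2 - y ^ 2)` factors into two nonnegative terms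
    have hxy' : x * y ≤ y ^ 2 := by nlinarith
    have hlo : 0 ≤ (V - 1) * y ^ 2 - x * y := by nlinarith
    have hhi : 0 ≤ (V + 1) * y ^ 2 - x * y := by nlinarith
    constructor <;> nlinarith [mul_nonneg hlo hhi]
  · have hVxy : V * (x * y) ≤ 0 := mul_nonpos_of_nonneg_of_nonpos (by linarith) hxy.le
    constructor <;> nlinarith [sq_nonneg (V * y)]

theorem step {V : ℝ} (hV : 2 ≤ V) (b : Bool) (h : GrowingPair x y) :
    GrowingPair y ((if b then V * y else 0) - x) := by
  cases b
  · simpa using h.hole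
  · simpa using h.tooth hV

end GrowingPair

namespace IsChainSolution

variable {L : ℤ} {χ : ℤ → Bool} {V : ℝ} {φ : ℤ → ℝ}

theorem succ_eq (h : IsChainSolution L χ V φ) {n : ℤ} (h1 : 1 ≤ n) (hL : n ≤ L - 1) :
    φ (n + 1) = (if χ n then V * φ n else 0) - φ (n - 1) := by
  linarith [h n h1 hL]

theorem pair_induction (h : IsChainSolution L χ V φ) (P : ℝ → ℝ → Prop)
    (hP : ∀ (b : Bool) (x y : ℝ), P x y → P y ((if b then V * y else 0) - x))
    {k : ℤ} (hk : 0 ≤ k) (hPk : P (φ k) (φ (k + 1))) :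
    ∀ m, k ≤ m → m ≤ L - 1 → P (φ m) (φ (m + 1)) := by
  intro m hkm
  induction m, hkm using Int.leInduction with
  | base => exact fun _ => hPk
  | succ m hkm ih =>
    intro hm
    rw [h.succ_eq (by omega) hm, add_sub_cancel_right]
    exact hP _ _ _ (ih (by omega))

theorem phi_one_ne_zero (h : IsChainSolution L χ V φ) (h0 : φ 0 = 0)
    (hφ : ∃ n : ℤ, 1 ≤ n ∧ n ≤ L - 1 ∧ φ n ≠ 0) : φ 1 ≠ 0 := by
  intro h1
  obtain ⟨n, hn1, hnL, hn⟩ := hφ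
  have hzero := h.pair_induction (fun x y => x = 0 ∧ y = 0)
    (fun b x y ⟨hx, hy⟩ => ⟨hy, by simp [hx, hy]⟩) le_rfl ⟨h0, by simpa using h1⟩
  exact hn (hzero n (by omega) hnL).1

theorem ne_zero_of_growingPair (h : IsChainSolution L χ V φ) (hV : 2 ≤ V) {k : ℤ} (hk : 0 ≤ k)
    (hkL : k ≤ L - 1) (hgrow : GrowingPair (φ k) (φ (k + 1))) : φ L ≠ 0 := by
  have := h.pair_induction GrowingPair (fun b _ _ hxy => hxy.step hV b) hk hgrow (L - 1) hkL le_rfl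
  simpa using this.snd_ne_zero

theorem eq_zero_iff_two_dvd (h : IsChainSolution L χ V φ) (h0 : φ 0 = 0) (h1 : φ 1 ≠ 0)
    {n : ℤ} (hnL : n ≤ L - 1) (hteeth : ∀ k : ℤ, 1 ≤ k → k ≤ n → χ k = true → 2 ∣ k) :
    ∀ j : ℤ, 0 ≤ j → j ≤ n + 1 → (φ j = 0 ↔ 2 ∣ j) := by
  suffices hpair : ∀ j : ℤ, 0 ≤ j → j ≤ n →
      (φ j = 0 ↔ 2 ∣ j) ∧ (φ (j + 1) = 0 ↔ 2 ∣ (j + 1)) by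
    intro j hj0 hjn
    obtain rfl | hj := eq_or_ne j 0
    · simp [h0]
    · simpa using (hpair (j - 1) (by omega) (by omega)).2
  intro j hj0
  induction j, hj0 using Int.leInduction with
  | base => exact fun _ => ⟨by simp [h0], by simp [h1]⟩
  | succ j hj ih =>
    intro hjn
    obtain ⟨ihj, ih⟩ := ih (by omega)
    -- at an odd site there is no tooth, at an even one `φ` vanishes: either way the tooth term drops
    have hflip : φ (j + 1 + 1) = -φ j := by
      rw [h.succ_eq (by omega) (by omega), add_sub_cancel_right]
      by_cases hpar : 2 ∣ (j + 1)
      · simp [ih.mpr hpar]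
      · have : χ (j + 1) = false := by
          by_contra hχ
          exact hpar (hteeth _ (by omega) hjn (by simpa using hχ))
        simp [this]
    refine ⟨ih, ?_⟩
    rw [hflip, neg_eq_zero, ihj]
    omega

theorem two_dvd_of_tooth (h : IsChainSolution L χ V φ) (hV : 2 ≤ V) (h0 : φ 0 = 0)
    (h1 : φ 1 ≠ 0) (hL : φ L = 0) :
    ∀ k : ℤ, 1 ≤ k → k ≤ L - 1 → χ k = true → 2 ∣ k := by
  by_contra! hodd
  obtain ⟨t, ⟨ht1, htL, htχ, ht⟩, htmin⟩ := Int.exists_least_of_bdd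
    (P := fun k => 1 ≤ k ∧ k ≤ L - 1 ∧ χ k = true ∧ ¬ 2 ∣ k) ⟨1, fun _ hk => hk.1⟩ hodd
  have hparity := h.eq_zero_iff_two_dvd h0 h1 (n := t - 1) (by omega) fun k hk1 hkt hkχ => by
    by_contra hk
    exact absurd (htmin k ⟨hk1, by omega, hkχ, hk⟩) (by omega)
  have hprev : φ (t - 1) = 0 := (hparity _ (by omega) (by omega)).mpr (by omega)
  have hcur : φ t ≠ 0 := fun h' => ht ((hparity t (by omega) (by omega)).mp h')
  refine h.ne_zero_of_growingPair hV (by omega) htL ?_ hL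
  rw [h.succ_eq ht1 htL, htχ, hprev, if_pos rfl, sub_zero]
  exact GrowingPair.of_ne_zero (by linarith) hcur

end IsChainSolution

theorem stmt17_general (L : ℤ) (χ : ℤ → Bool) (V : ℝ) (hV : 2 < V)
    (φ : ℤ → ℝ) (hb : φ 0 = 0 ∧ φ L = 0)
    (hφ0 : ∃ n : ℤ, 1 ≤ n ∧ n ≤ L - 1 ∧ φ n ≠ 0)
    (heq : ∀ n : ℤ, 1 ≤ n → n ≤ L - 1 →
      φ (n + 1) + φ (n - 1) = if χ n then V * φ n else 0) :
    (∀ n : ℤ, 1 ≤ n → n ≤ L - 1 → χ n = true →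
      (∀ m : ℤ, 1 ≤ m → m ≤ L - 1 → (m = n + 1 ∨ m = n - 1) → χ m = false)) ∧
    (∀ m n : ℤ,
      (m = 0 ∨ m = L ∨ (1 ≤ m ∧ m ≤ L - 1 ∧ χ m = true)) →
      (n = 0 ∨ n = L ∨ (1 ≤ n ∧ n ≤ L - 1 ∧ χ n = true)) →
      (2 : ℤ) ∣ (m - n)) := by
  obtain ⟨h0, hL⟩ := hb
  have h : IsChainSolution L χ V φ := heq
  have h1 := h.phi_one_ne_zero h0 hφ0
  have hteeth := h.two_dvd_of_tooth hV.le h0 h1 hL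
  have hLeven : 2 ∣ L := by
    obtain ⟨n, hn1, hnL, -⟩ := hφ0
    exact (h.eq_zero_iff_two_dvd h0 h1 le_rfl hteeth L (by omega) (by omega)).mp hL
  have hsite : ∀ m : ℤ, (m = 0 ∨ m = L ∨ (1 ≤ m ∧ m ≤ L - 1 ∧ χ m = true)) → 2 ∣ m := by
    rintro m (rfl | rfl | ⟨hm1, hmL, hmχ⟩)
    exacts [dvd_zero 2, hLeven, hteeth m hm1 hmL hmχ]
  refine ⟨fun n hn1 hnL hnχ m hm1 hmL hmn => ?_, fun m n hm hn => ?_⟩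
  · by_contra hmχ
    have := hteeth m hm1 hmL (by simpa using hmχ)
    have := hteeth n hn1 hnL hnχ
    omega
  · have := hsite m hm
    have := hsite n hn
    omega

/-- If `φ ≠ 0` solves the `E = 0` binary-chain equation (`φ(n+1) + φ(n-1) = 0` at holes,
`φ(n+1) + φ(n-1) = Vφ(n)` at teeth) with `V > 2` and Dirichlet boundary conditions on a
chain with at least one tooth and one hole, then all teeth are isolated and all gaps
between consecutive teeth (counting the endpoints `0` and `L` as teeth) are even:
the chain is a 2-tooth chain. -/
theorem stmt17 (L : ℤ) (hL : 2 ≤ L) (χ : ℤ → Bool) (V : ℝ) (hV : 2 < V)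
    (htooth : ∃ n : ℤ, 1 ≤ n ∧ n ≤ L - 1 ∧ χ n = true)
    (hhole : ∃ n : ℤ, 1 ≤ n ∧ n ≤ L - 1 ∧ χ n = false)
    (φ : ℤ → ℝ) (hb : φ 0 = 0 ∧ φ L = 0)
    (hφ0 : ∃ n : ℤ, 1 ≤ n ∧ n ≤ L - 1 ∧ φ n ≠ 0)
    (heq : ∀ n : ℤ, 1 ≤ n → n ≤ L - 1 →
      φ (n + 1) + φ (n - 1) = if χ n then V * φ n else 0) :
    (∀ n : ℤ, 1 ≤ n → n ≤ L - 1 → χ n = true →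
      (∀ m : ℤ, 1 ≤ m → m ≤ L - 1 → (m = n + 1 ∨ m = n - 1) → χ m = false)) ∧
    (∀ m n : ℤ,
      (m = 0 ∨ m = L ∨ (1 ≤ m ∧ m ≤ L - 1 ∧ χ m = true)) →
      (n = 0 ∨ n = L ∨ (1 ≤ n ∧ n ≤ L - 1 ∧ χ n = true)) →
      (2 : ℤ) ∣ (m - n)) :=
  stmt17_general L χ V hV φ hb hφ0 heq
end

section
/- Let C be a chain that is a k₀-tooth chain for some integer k₀ > 1 (all gaps between consecutive teeth, with endpoints counted as teeth, are multiples of k₀, and all teeth are isolated). Then for every integer p with 1 ≤ p < k₀, the value E_p = -2cos(πp/k₀) is an eigenvalue of the binary-chain Hamiltonian H(V) for every disorder strength V, with an eigenfunction vanishing on all teeth; in particular dE_p/dV = 0. -/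
/-!
On every string of holes between consecutive teeth the Hamiltonian is the free Laplacian, for
which `n ↦ sin (θ n)` with `θ = π p / k₀` is a solution of energy `-2 cos θ`. Since `θ k₀ = π p`,
this sine vanishes at every multiple of `k₀`, hence at every tooth and at both endpoints; there
the potential term `V χ(n) φ(n)` is zero, so the same function is an eigenfunction for every `V`.
-/

open Real

theorem sin_mul_add_one_add_sin_mul_sub_one (θ x : ℝ) :
    sin (θ * (x + 1)) + sin (θ * (x - 1)) = 2 * cos θ * sin (θ * x) := by
  rw [mul_add, mul_sub, mul_one, sin_add, sin_sub]
  ring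

theorem sin_pi_mul_div_mul_eq_zero_of_dvd (p k : ℕ) {n : ℤ} (h : (k : ℤ) ∣ n) :
    sin (π * p / k * n) = 0 := by
  obtain ⟨m, rfl⟩ := h
  rcases Nat.eq_zero_or_pos k with rfl | hk
  · simp
  have hθ : π * p / k * ((k * m : ℤ) : ℝ) = ((p * m : ℤ) : ℝ) * π := by
    push_cast
    field_simp
  rw [hθ, sin_int_mul_pi]

theorem sin_pi_mul_div_pos {p k : ℕ} (hp : 0 < p) (hpk : p < k) : 0 < sin (π * p / k) := by
  have hk : (0 : ℝ) < k := by exact_mod_cast hp.trans hpk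
  apply sin_pos_of_pos_of_lt_pi (by positivity)
  rw [div_lt_iff₀ hk]
  exact mul_lt_mul_of_pos_left (by exact_mod_cast hpk) pi_pos

theorem binaryChain_eq_of_free_of_vanishing {φ : ℤ → ℝ} {χ : ℤ → Bool} {E : ℝ} {n : ℤ}
    (hfree : -φ (n + 1) - φ (n - 1) = E * φ n) (hteeth : χ n = true → φ n = 0) (V : ℝ) :
    -φ (n + 1) - φ (n - 1) + V * (if χ n then 1 else 0) * φ n = E * φ n := by
  cases hχ : χ n
  · simpa using hfree
  · simpa [hteeth hχ] using hfree

theorem stmt18_general (L : ℤ) (hL : 2 ≤ L) (k₀ : ℕ) (χ : ℤ → Bool)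
    (hLk : (k₀ : ℤ) ∣ L)
    (hteeth : ∀ n : ℤ, 1 ≤ n → n ≤ L - 1 → χ n = true → (k₀ : ℤ) ∣ n) :
    ∀ p : ℕ, 1 ≤ p → p < k₀ →
      ∃ φ : ℤ → ℝ,
        (∃ n : ℤ, 1 ≤ n ∧ n ≤ L - 1 ∧ φ n ≠ 0) ∧
        φ 0 = 0 ∧ φ L = 0 ∧
        (∀ n : ℤ, 1 ≤ n → n ≤ L - 1 → χ n = true → φ n = 0) ∧
        (∀ V : ℝ, ∀ n : ℤ, 1 ≤ n → n ≤ L - 1 →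
          -φ (n + 1) - φ (n - 1) + V * (if χ n then 1 else 0) * φ n
            = (-2 * Real.cos (Real.pi * p / k₀)) * φ n) := by
  intro p hp hpk
  set θ := π * p / k₀
  have hvanish : ∀ n : ℤ, 1 ≤ n → n ≤ L - 1 → χ n = true → sin (θ * n) = 0 :=
    fun n hn1 hn2 hχ => sin_pi_mul_div_mul_eq_zero_of_dvd p k₀ (hteeth n hn1 hn2 hχ)
  refine ⟨fun n => sin (θ * n), ⟨1, le_rfl, by omega, ?_⟩, by simp,
    sin_pi_mul_div_mul_eq_zero_of_dvd p k₀ hLk, hvanish, fun V n hn1 hn2 => ?_⟩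
  · simpa using (sin_pi_mul_div_pos hp hpk).ne'
  · refine binaryChain_eq_of_free_of_vanishing (φ := fun n : ℤ => sin (θ * n)) ?_
      (hvanish n hn1 hn2) V
    have := sin_mul_add_one_add_sin_mul_sub_one θ n
    push_cast
    linarith

/-- On a `k₀`-tooth chain (Dirichlet b.c., all tooth positions—with the endpoints `0`
and `L` counted as teeth—multiples of `k₀ > 1`), the value `E_p = -2cos(πp/k₀)` is, for
every `1 ≤ p < k₀`, an eigenvalue of the binary-chain Hamiltonian for every disorder
strength `V`, with an eigenfunction vanishing on all teeth (hence `dE_p/dV = 0`). -/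
theorem stmt18 (L : ℤ) (hL : 2 ≤ L) (k₀ : ℕ) (hk₀ : 1 < k₀) (χ : ℤ → Bool)
    (hLk : (k₀ : ℤ) ∣ L)
    (hteeth : ∀ n : ℤ, 1 ≤ n → n ≤ L - 1 → χ n = true → (k₀ : ℤ) ∣ n) :
    ∀ p : ℕ, 1 ≤ p → p < k₀ →
      ∃ φ : ℤ → ℝ,
        (∃ n : ℤ, 1 ≤ n ∧ n ≤ L - 1 ∧ φ n ≠ 0) ∧
        φ 0 = 0 ∧ φ L = 0 ∧
        (∀ n : ℤ, 1 ≤ n → n ≤ L - 1 → χ n = true → φ n = 0) ∧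
        (∀ V : ℝ, ∀ n : ℤ, 1 ≤ n → n ≤ L - 1 →
          -φ (n + 1) - φ (n - 1) + V * (if χ n then 1 else 0) * φ n
            = (-2 * Real.cos (Real.pi * p / k₀)) * φ n) :=
  stmt18_general L hL k₀ χ hLk hteeth
end
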